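/- In a cartesian differential category, the distributivity isomorphism σ = ⟨⟨π₁∘π₁, π₁∘π₂⟩, ⟨π₂∘π₁, π₂∘π₂⟩⟩ : TTX → TTX is a natural transformation T² → T² (i.e., T(T(f)) ∘ σ = σ ∘ T(T(f)) for all f) and is a distributive law of the tangent bundle monad T over itself: σ∘T(η) = η T, σ∘ηT = T(η), σ∘T(μ) = μT∘T(σ)∘σT, and σ∘μT = T(μ)∘σT∘T(σ). -/

import Mathlib

open CategoryTheory

universe v u

/-- Hom-sets carry a commutative additive monoid structure. -/
class HomAdd (C : Type u) [Category.{v} C] where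
  homMonoid : ∀ X Y : C, AddCommMonoid (X ⟶ Y)

attribute [instance] HomAdd.homMonoid

/-- A morphism is additive if it preserves the additive structure under
precomposition. -/
def IsAdditive {C : Type u} [Category.{v} C] [HomAdd C] {X Y : C} (f : X ⟶ Y) : Prop :=
  (∀ {W : C} (g h : W ⟶ X), (g + h) ≫ f = g ≫ f + h ≫ f) ∧
  (∀ {W : C}, (0 : W ⟶ X) ≫ f = 0)

/-- A cartesian left-additive category: a category with chosen finite products,
hom-sets commutative monoids, composition is left-additive (precomposition
preserves sums), projections are additive, and pairings of additive
morphisms are additive. -/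
class CLAC (C : Type u) [Category.{v} C] extends HomAdd C where
  P : C → C → C
  p1 : ∀ {X Y : C}, P X Y ⟶ X
  p2 : ∀ {X Y : C}, P X Y ⟶ Y
  pair : ∀ {Z X Y : C}, (Z ⟶ X) → (Z ⟶ Y) → (Z ⟶ P X Y)
  pair_fst : ∀ {Z X Y : C} (f : Z ⟶ X) (g : Z ⟶ Y), pair f g ≫ p1 = f
  pair_snd : ∀ {Z X Y : C} (f : Z ⟶ X) (g : Z ⟶ Y), pair f g ≫ p2 = g
  pair_ext : ∀ {Z X Y : C} (h k : Z ⟶ P X Y),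
    h ≫ p1 = k ≫ p1 → h ≫ p2 = k ≫ p2 → h = k
  one : C
  bang : ∀ X : C, X ⟶ one
  bang_unique : ∀ {X : C} (f : X ⟶ one), f = bang X
  comp_add : ∀ {X Y Z : C} (f : X ⟶ Y) (g h : Y ⟶ Z),
    f ≫ (g + h) = f ≫ g + f ≫ h
  comp_zero : ∀ {X Y Z : C} (f : X ⟶ Y), f ≫ (0 : Y ⟶ Z) = 0
  p1_additive : ∀ {X Y : C}, IsAdditive (p1 (X := X) (Y := Y))
  p2_additive : ∀ {X Y : C}, IsAdditive (p2 (X := X) (Y := Y))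
  pair_additive : ∀ {Z X Y : C} (f : Z ⟶ X) (g : Z ⟶ Y),
    IsAdditive f → IsAdditive g → IsAdditive (pair f g)

namespace CLAC

variable {C : Type u} [Category.{v} C] [CLAC C]

/-- The product of two morphisms, `f × g = ⟨f ∘ π₁, g ∘ π₂⟩`. -/
def prodMor {W X Y Z : C} (f : W ⟶ Y) (g : X ⟶ Z) : P W X ⟶ P Y Z :=
  pair (p1 ≫ f) (p2 ≫ g)

end CLAC

open CLAC

/-- A cartesian differential category: a cartesian left-additive category
equipped with a differential operator `D` satisfying axioms D1–D7. -/
class CDC (C : Type u) [Category.{v} C] extends CLAC C where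
  D : ∀ {X Y : C}, (X ⟶ Y) → (P X X ⟶ Y)
  D1 : ∀ {X Y : C} (f g : X ⟶ Y), D (f + g) = D f + D g
  D1' : ∀ {X Y : C}, D (0 : X ⟶ Y) = 0
  D2 : ∀ {W X Y : C} (f : X ⟶ Y) (h k v : W ⟶ X),
    pair (h + k) v ≫ D f = pair h v ≫ D f + pair k v ≫ D f
  D2' : ∀ {W X Y : C} (f : X ⟶ Y) (v : W ⟶ X), pair 0 v ≫ D f = 0
  D3 : ∀ {X : C}, D (𝟙 X) = p1
  D3₁ : ∀ {X Y : C}, D (p1 (X := X) (Y := Y)) = p1 ≫ p1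
  D3₂ : ∀ {X Y : C}, D (p2 (X := X) (Y := Y)) = p1 ≫ p2
  D4 : ∀ {Z X Y : C} (f : Z ⟶ X) (g : Z ⟶ Y), D (pair f g) = pair (D f) (D g)
  D5 : ∀ {X Y Z : C} (g : X ⟶ Y) (f : Y ⟶ Z),
    D (g ≫ f) = pair (D g) (p2 ≫ g) ≫ D f
  D6 : ∀ {W X Y : C} (f : X ⟶ Y) (g h k : W ⟶ X),
    pair (pair g 0) (pair h k) ≫ D (D f) = pair g k ≫ D f
  D7 : ∀ {W X Y : C} (f : X ⟶ Y) (g h k : W ⟶ X),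
    pair (pair 0 h) (pair g k) ≫ D (D f) = pair (pair 0 g) (pair h k) ≫ D (D f)

namespace CDC

variable {C : Type u} [Category.{v} C] [CDC C]

/-- The tangent bundle functor on morphisms: `T(f) = ⟨D(f), f ∘ π₂⟩`. -/
def Tm {X Y : C} (f : X ⟶ Y) : P X X ⟶ P Y Y :=
  pair (D f) (p2 ≫ f)

/-- The unit `η_X = ⟨0, id⟩ : X ⟶ TX`. -/
def η (X : C) : X ⟶ P X X := pair 0 (𝟙 X)

/-- The multiplication `μ_X = ⟨π₂∘π₁ + π₁∘π₂, π₂∘π₂⟩ : TTX ⟶ TX`. -/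
def μ (X : C) : P (P X X) (P X X) ⟶ P X X :=
  pair (p1 ≫ p2 + p2 ≫ p1) (p2 ≫ p2)

/-- The (right) tensorial strength `t_{X,Y} = ⟨⟨0, π₁∘π₂⟩, ⟨π₁, π₂∘π₂⟩⟩`. -/
def t (X Y : C) : P X (P Y Y) ⟶ P (P X Y) (P X Y) :=
  pair (pair 0 (p2 ≫ p1)) (pair p1 (p2 ≫ p2))

/-- The left tensorial strength `t'_{X,Y} = ⟨⟨π₁∘π₁, 0⟩, ⟨π₂∘π₁, π₂⟩⟩`. -/
def t' (X Y : C) : P (P X X) Y ⟶ P (P X Y) (P X Y) :=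
  pair (pair (p1 ≫ p1) 0) (pair (p1 ≫ p2) p2)

/-- The distributivity isomorphism
`σ = ⟨⟨π₁∘π₁, π₁∘π₂⟩, ⟨π₂∘π₁, π₂∘π₂⟩⟩ : (A×B)×(E×F) ⟶ (A×E)×(B×F)`. -/
def Sig (A B E F : C) : P (P A B) (P E F) ⟶ P (P A E) (P B F) :=
  pair (pair (p1 ≫ p1) (p2 ≫ p1)) (pair (p1 ≫ p2) (p2 ≫ p2))

/-- The symmetry `c_{X,Y} = ⟨π₂, π₁⟩`. -/
def symm (X Y : C) : P X Y ⟶ P Y X := pair p2 p1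

/-- The left unitor `ℓ_X = ⟨!_X, id⟩ : X ⟶ 1 × X`. -/
def lUnit (X : C) : X ⟶ P one X := pair (bang X) (𝟙 X)

/-- The associator `a_{X,Y,Z} = ⟨π₁∘π₁, ⟨π₂∘π₁, π₂⟩⟩`. -/
def assoc (X Y Z : C) : P (P X Y) Z ⟶ P X (P Y Z) :=
  pair (p1 ≫ p1) (pair (p1 ≫ p2) p2)

/-- The monoidal structure map `ψ_{X,Y} = ⟨π₁×π₁, π₂×π₂⟩ : TX×TY ⟶ T(X×Y)`. -/
def ψ (X Y : C) : P (P X X) (P Y Y) ⟶ P (P X Y) (P X Y) :=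
  pair (prodMor p1 p1) (prodMor p2 p2)

end CDC

open CDC

variable {C : Type u} [Category.{v} C] [CDC C]

/-!
The isomorphism `σ` swaps the two middle coordinates of `TTX`. Expanding `T(T f)`, naturality
of `σ` reduces to the invariance of the second derivative `D(D f)` under that swap, which follows
from D6 and D7 once `D(D f)` is split additively in its first argument (D2).

The maps `η`, `μ` and `σ` are linear (`D g = π₁ ≫ g`), so `T` acts on each of them as `g × g`;
the four distributive-law equations then become identities between maps built from projections,
sums and zero.
-/

attribute [local simp] pair_fst pair_snd comp_add comp_zero

namespace CLAC

section

variable {C : Type*} [Category C] [CLAC C]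

@[simp]
lemma pair_fst_assoc {Z X Y W : C} (f : Z ⟶ X) (g : Z ⟶ Y) (k : X ⟶ W) :
    pair f g ≫ p1 ≫ k = f ≫ k := by
  rw [← Category.assoc, pair_fst]

@[simp]
lemma pair_snd_assoc {Z X Y W : C} (f : Z ⟶ X) (g : Z ⟶ Y) (k : Y ⟶ W) :
    pair f g ≫ p2 ≫ k = g ≫ k := by
  rw [← Category.assoc, pair_snd]

@[simp]
lemma comp_pair {W Z X Y : C} (f : W ⟶ Z) (g : Z ⟶ X) (h : Z ⟶ Y) :
    f ≫ pair g h = pair (f ≫ g) (f ≫ h) :=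
  pair_ext _ _ (by rw [Category.assoc, pair_fst, pair_fst])
    (by rw [Category.assoc, pair_snd, pair_snd])

@[simp]
lemma comp_pair_assoc {W Z X Y V : C} (f : W ⟶ Z) (g : Z ⟶ X) (h : Z ⟶ Y)
    (k : P X Y ⟶ V) : f ≫ pair g h ≫ k = pair (f ≫ g) (f ≫ h) ≫ k := by
  rw [← Category.assoc, comp_pair]

@[simp]
lemma zero_comp_p1 {W X Y : C} : (0 : W ⟶ P X Y) ≫ p1 = 0 := p1_additive.2

@[simp]
lemma zero_comp_p2 {W X Y : C} : (0 : W ⟶ P X Y) ≫ p2 = 0 := p2_additive.2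

@[simp]
lemma add_comp_p1 {W X Y : C} (g h : W ⟶ P X Y) :
    (g + h) ≫ p1 = g ≫ p1 + h ≫ p1 := p1_additive.1 g h

@[simp]
lemma add_comp_p2 {W X Y : C} (g h : W ⟶ P X Y) :
    (g + h) ≫ p2 = g ≫ p2 + h ≫ p2 := p2_additive.1 g h

@[simp]
lemma pair_p1_p2 {X Y : C} : pair (p1 : P X Y ⟶ X) p2 = 𝟙 (P X Y) :=
  pair_ext _ _ (by simp) (by simp)

@[simp]
lemma pair_comp_p1_comp_p2 {W X Y : C} (h : W ⟶ P X Y) : pair (h ≫ p1) (h ≫ p2) = h :=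
  pair_ext _ _ (pair_fst _ _) (pair_snd _ _)

@[simp]
lemma pair_zero_zero {W X Y : C} : pair (0 : W ⟶ X) (0 : W ⟶ Y) = 0 :=
  pair_ext _ _ (by simp) (by simp)

@[simp]
lemma pair_add_pair {W X Y : C} (a c : W ⟶ X) (b d : W ⟶ Y) :
    pair a b + pair c d = pair (a + c) (b + d) :=
  pair_ext _ _ (by simp) (by simp)

lemma pair_eq_add {W X Y : C} (a : W ⟶ X) (b : W ⟶ Y) :
    pair a b = pair a 0 + pair 0 b := by
  simp

end

end CLAC

namespace CDC

lemma pair_pair_comp_D_D_symm {W X Y : C} (f : X ⟶ Y) (a b c d : W ⟶ X) :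
    pair (pair a b) (pair c d) ≫ D (D f) = pair (pair a c) (pair b d) ≫ D (D f) := by
  rw [pair_eq_add a b, D2, pair_eq_add a c, D2, D6, D6, D7]

lemma Sig_comp_D_D {X Y : C} (f : X ⟶ Y) : Sig X X X X ≫ D (D f) = D (D f) := by
  simpa [Sig] using (pair_pair_comp_D_D_symm f (p1 ≫ p1) (p1 ≫ p2) (p2 ≫ p1) (p2 ≫ p2)).symm

lemma Tm_Tm {X Y : C} (f : X ⟶ Y) :
    Tm (Tm f) = pair (pair (D (D f)) (pair (p1 ≫ p2) (p2 ≫ p2) ≫ D f))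
      (pair (p2 ≫ D f) (p2 ≫ p2 ≫ f)) := by
  simp [Tm, D4, D5, D3₂]

def IsLinear {X Y : C} (g : X ⟶ Y) : Prop := D g = p1 ≫ g

lemma isLinear_id {X : C} : IsLinear (𝟙 X) := by simp [IsLinear, D3]

lemma isLinear_zero {X Y : C} : IsLinear (0 : X ⟶ Y) := by simp [IsLinear, D1']

lemma isLinear_p1 {X Y : C} : IsLinear (p1 : P X Y ⟶ X) := D3₁

lemma isLinear_p2 {X Y : C} : IsLinear (p2 : P X Y ⟶ Y) := D3₂

lemma IsLinear.comp {X Y Z : C} {g : X ⟶ Y} {h : Y ⟶ Z} (hg : IsLinear g)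
    (hh : IsLinear h) : IsLinear (g ≫ h) := by
  rw [IsLinear, D5, hg, hh, ← Category.assoc, pair_fst, Category.assoc]

lemma IsLinear.add {X Y : C} {g h : X ⟶ Y} (hg : IsLinear g) (hh : IsLinear h) :
    IsLinear (g + h) := by
  rw [IsLinear, D1, hg, hh, comp_add]

lemma IsLinear.pair {X Y Z : C} {g : X ⟶ Y} {h : X ⟶ Z} (hg : IsLinear g)
    (hh : IsLinear h) : IsLinear (pair g h) := by
  rw [IsLinear, D4, hg, hh, comp_pair]

lemma IsLinear.Tm_eq {X Y : C} {g : X ⟶ Y} (hg : IsLinear g) : Tm g = prodMor g g := by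
  rw [Tm, hg, prodMor]

lemma isLinear_η (X : C) : IsLinear (η X) :=
  isLinear_zero.pair isLinear_id

lemma isLinear_μ (X : C) : IsLinear (μ X) :=
  ((isLinear_p1.comp isLinear_p2).add (isLinear_p2.comp isLinear_p1)).pair
    (isLinear_p2.comp isLinear_p2)

lemma isLinear_Sig (A B E F : C) : IsLinear (Sig A B E F) :=
  ((isLinear_p1.comp isLinear_p1).pair (isLinear_p2.comp isLinear_p1)).pair
    ((isLinear_p1.comp isLinear_p2).pair (isLinear_p2.comp isLinear_p2))

lemma Sig_comp_Tm_Tm {X Y : C} (f : X ⟶ Y) :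
    Sig X X X X ≫ Tm (Tm f) = Tm (Tm f) ≫ Sig Y Y Y Y := by
  rw [Tm_Tm, comp_pair, comp_pair, Sig_comp_D_D]
  simp [Sig]

lemma Tm_η_comp_Sig (X : C) : Tm (η X) ≫ Sig X X X X = η (P X X) := by
  rw [(isLinear_η X).Tm_eq]
  simp [Sig, η, prodMor]

lemma η_comp_Sig (X : C) : η (P X X) ≫ Sig X X X X = Tm (η X) := by
  rw [(isLinear_η X).Tm_eq]
  simp [Sig, η, prodMor]

lemma Tm_μ_comp_Sig (X : C) :
    Tm (μ X) ≫ Sig X X X X =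
      Sig (P X X) (P X X) (P X X) (P X X) ≫ Tm (Sig X X X X) ≫ μ (P X X) := by
  rw [(isLinear_μ X).Tm_eq, (isLinear_Sig X X X X).Tm_eq]
  simp [Sig, μ, prodMor]

lemma μ_comp_Sig (X : C) :
    μ (P X X) ≫ Sig X X X X =
      Tm (Sig X X X X) ≫ Sig (P X X) (P X X) (P X X) (P X X) ≫ Tm (μ X) := by
  rw [(isLinear_μ X).Tm_eq, (isLinear_Sig X X X X).Tm_eq]
  simp [Sig, μ, prodMor]

end CDC

/-- `σ` is a natural transformation `T² ⟶ T²` and a distributive law of the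
tangent bundle monad over itself. -/
theorem sigma_distributive_law (X Y : C) (f : X ⟶ Y) :
    Sig X X X X ≫ Tm (Tm f) = Tm (Tm f) ≫ Sig Y Y Y Y ∧
    Tm (η X) ≫ Sig X X X X = η (P X X) ∧
    η (P X X) ≫ Sig X X X X = Tm (η X) ∧
    Tm (μ X) ≫ Sig X X X X =
      Sig (P X X) (P X X) (P X X) (P X X) ≫ Tm (Sig X X X X) ≫ μ (P X X) ∧
    μ (P X X) ≫ Sig X X X X =
      Tm (Sig X X X X) ≫ Sig (P X X) (P X X) (P X X) (P X X) ≫ Tm (μ X) :=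
  ⟨Sig_comp_Tm_Tm f, Tm_η_comp_Sig X, η_comp_Sig X, Tm_μ_comp_Sig X, μ_comp_Sig X⟩
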